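/- arXiv:2307.06931 — 2 statements merged into one kernel-verified Lean document; each statement's English description precedes it below -/
import Mathlib

section
/- Let h : [0, b+c] → X be as follows: h restricted to [0,b] is L-bi-Lipschitz, h restricted to [b, b+c] is a unit-speed geodesic, and for every s ∈ [0,b] and t ∈ [b, b+c] one has d(h(s), h(t)) ≥ d(h(s), h(b)) and d(h(s), h(t)) ≥ d(h(t), h(b)). Then for all s ∈ [0,b] and t ∈ [b, b+c], d(h(s), h(t)) ≥ (2L)⁻¹ |s - t|. -/
open Metric Set

/-- `f` is an `L`-bi-Lipschitz embedding of `A ⊆ ℝ` into the metric space `X`. -/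
def BiLipschitzOn {X : Type*} [MetricSpace X] (L : ℝ) (f : ℝ → X) (A : Set ℝ) : Prop :=
  ∀ x ∈ A, ∀ y ∈ A, L⁻¹ * |x - y| ≤ dist (f x) (f y) ∧ dist (f x) (f y) ≤ L * |x - y|

/-- if `h` is `L`-bi-Lipschitz on `[0,b]`, a unit-speed geodesic on `[b,b+c]`,
and `d(h s, h t) ≥ max (d(h s, h b), d(h t, h b))` for `s ∈ [0,b]`, `t ∈ [b,b+c]`, then
`d(h s, h t) ≥ (2L)⁻¹ |s - t|` for all such `s, t`. -/
theorem statement1 {X : Type*} [MetricSpace X]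
    (b c L : ℝ) (hb : 0 < b) (hc : 0 < c) (hL : 1 ≤ L)
    (h : ℝ → X)
    (hbl : BiLipschitzOn L h (Icc 0 b))
    (hgeo : ∀ s ∈ Icc b (b + c), ∀ t ∈ Icc b (b + c), dist (h s) (h t) = |s - t|)
    (hmin : ∀ s ∈ Icc 0 b, ∀ t ∈ Icc b (b + c),
      dist (h s) (h b) ≤ dist (h s) (h t) ∧ dist (h t) (h b) ≤ dist (h s) (h t)) :
    ∀ s ∈ Icc 0 b, ∀ t ∈ Icc b (b + c), (2 * L)⁻¹ * |s - t| ≤ dist (h s) (h t) := by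
  intro s hs t ht
  have hL0 : (0:ℝ) < L := lt_of_lt_of_le one_pos hL
  have hbmem : b ∈ Icc (0:ℝ) b := ⟨le_of_lt hb, le_refl b⟩
  have hbmem' : b ∈ Icc b (b + c) := ⟨le_refl b, by linarith⟩
  have h1 : L⁻¹ * |s - b| ≤ dist (h s) (h b) := (hbl s hs b hbmem).1
  have h2 : dist (h t) (h b) = |t - b| := hgeo t ht b hbmem'
  obtain ⟨hm1, hm2⟩ := hmin s hs t ht
  have habs1 : |s - b| = b - s := by rw [abs_sub_comm]; exact abs_of_nonneg (by linarith [hs.2])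
  have habs2 : |t - b| = t - b := abs_of_nonneg (by linarith [ht.1])
  have habs3 : |s - t| = (b - s) + (t - b) := by
    rw [abs_sub_comm]; rw [abs_of_nonneg (by linarith [hs.2, ht.1])]; ring
  have hinv : L⁻¹ ≤ 1 := by
    rw [inv_le_one_iff₀]; right; exact hL
  have key : L⁻¹ * ((b - s) + (t - b)) ≤ 2 * dist (h s) (h t) := by
    have e1 : L⁻¹ * (b - s) ≤ dist (h s) (h t) := le_trans (by rw [habs1] at h1; exact h1) hm1
    have e2 : L⁻¹ * (t - b) ≤ dist (h s) (h t) := by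
      have : L⁻¹ * (t - b) ≤ t - b := by
        nlinarith [ht.1]
      rw [h2, habs2] at hm2; linarith
    nlinarith
  rw [habs3, mul_inv, mul_comm (2:ℝ)⁻¹ L⁻¹, mul_assoc]
  nlinarith [key]
end

section
/- Let X = (P₁ ∪ P₂) \ B(p₀, 1) where P₁, P₂ are two n-dimensional affine planes in ℝ^{2n-1} (n ≥ 2) intersecting in a line ℓ with p₀ ∈ ℓ, equipped with the Euclidean metric. Define f : (-∞,-1] ∪ {-1/2, 1/2} ∪ [1,∞) → X so that f(-1/2) ∈ P₁ \ (ℓ ∪ B(p₀,1)), f(1/2) ∈ P₂ \ (ℓ ∪ B(p₀,1)), and f maps ℝ \ (-1,1) isometrically onto ℓ \ B(p₀,1). Then f is bi-Lipschitz, but admits no continuous injective extension F : ℝ → X. -/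
open Metric Set

/-- Auxiliary: adding one point at positive distance and definite parameter separation
from an isometric piece gives a bi-Lipschitz bound for the mixed pairs. -/
lemma pair_bound {X : Type*} [MetricSpace X] (f : ℝ → X) (I : Set ℝ) (x : ℝ)
    (hiso : ∀ s ∈ I, ∀ t ∈ I, dist (f s) (f t) = |s - t|)
    (t₀ : ℝ) (ht₀ : t₀ ∈ I) (hsep : ∀ t ∈ I, 1 / 2 ≤ |x - t|)
    (d : ℝ) (hd : 0 < d) (hdist : ∀ t ∈ I, d ≤ dist (f x) (f t)) :
    ∃ L : ℝ, 1 ≤ L ∧ ∀ t ∈ I,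
      L⁻¹ * |x - t| ≤ dist (f x) (f t) ∧ dist (f x) (f t) ≤ L * |x - t| := by
  set C := dist (f x) (f t₀) + |x - t₀| with hC
  have hC0 : 0 ≤ C := add_nonneg dist_nonneg (abs_nonneg _)
  set M := C + d with hM
  have hM0 : 0 < M := by positivity
  refine ⟨max (2 * C + 1) (2 * M / d), le_max_of_le_left (by linarith), fun t ht => ?_⟩
  have hMd : 0 < 2 * M / d := by positivity
  have hmaxpos : (0:ℝ) < max (2 * C + 1) (2 * M / d) := lt_max_of_lt_right hMd
  have hub : dist (f x) (f t) ≤ C + |x - t| := by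
    calc dist (f x) (f t) ≤ dist (f x) (f t₀) + dist (f t₀) (f t) := dist_triangle _ _ _
      _ = dist (f x) (f t₀) + |t₀ - t| := by rw [hiso t₀ ht₀ t ht]
      _ ≤ dist (f x) (f t₀) + (|t₀ - x| + |x - t|) := by
          gcongr
          exact abs_sub_le _ _ _
      _ = C + |x - t| := by rw [abs_sub_comm t₀ x]; ring
  have hlb : |x - t| - C ≤ dist (f x) (f t) := by
    have h1 : |t₀ - t| ≤ dist (f x) (f t₀) + dist (f x) (f t) := by
      rw [← hiso t₀ ht₀ t ht]; exact dist_triangle_left _ _ _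
    have h2 : |x - t| ≤ |x - t₀| + |t₀ - t| := abs_sub_le _ _ _
    linarith
  have hsep' : 1 / 2 ≤ |x - t| := hsep t ht
  have hd' : d ≤ dist (f x) (f t) := hdist t ht
  constructor
  · -- lower bound
    have key : d * |x - t| ≤ (2 * M) * dist (f x) (f t) := by
      rcases le_or_gt (|x - t|) (2 * M) with h | h
      · nlinarith
      · nlinarith
    have h1 : (max (2 * C + 1) (2 * M / d))⁻¹ * |x - t| ≤ (2 * M / d)⁻¹ * |x - t| :=
      mul_le_mul_of_nonneg_right (inv_anti₀ hMd (le_max_right _ _)) (abs_nonneg _)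
    refine h1.trans ?_
    rw [inv_div, div_mul_eq_mul_div, div_le_iff₀ (by positivity)]
    nlinarith [key]
  · -- upper bound
    have h2 : C + |x - t| ≤ (2 * C + 1) * |x - t| := by nlinarith
    refine hub.trans (h2.trans ?_)
    have := le_max_left (2 * C + 1) (2 * M / d)
    nlinarith [abs_nonneg (x - t)]

/-- on the union of two `n`-planes in `ℝ^{2n-1}` intersecting in a line `ℓ`,
minus the unit ball about `p₀ ∈ ℓ`, the described map `f` is bi-Lipschitz but admits no
continuous injective extension `F : ℝ → X`. -/
theorem statement11 (n : ℕ) (hn : 2 ≤ n)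
    (P₁ P₂ : AffineSubspace ℝ (EuclideanSpace ℝ (Fin (2 * n - 1))))
    (h1 : Module.finrank ℝ P₁.direction = n)
    (h2 : Module.finrank ℝ P₂.direction = n)
    (hP : P₁ ≠ P₂)
    (hline : Module.finrank ℝ (P₁ ⊓ P₂).direction = 1)
    (p₀ : EuclideanSpace ℝ (Fin (2 * n - 1))) (hp₀ : p₀ ∈ P₁ ⊓ P₂)
    (f : ℝ → EuclideanSpace ℝ (Fin (2 * n - 1)))
    (hfdom : ∀ t ∈ Iic (-1 : ℝ) ∪ {-(1 / 2), (1 / 2)} ∪ Ici (1 : ℝ),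
      f t ∈ ((P₁ : Set (EuclideanSpace ℝ (Fin (2 * n - 1)))) ∪ P₂) \ Metric.ball p₀ 1)
    (hf1 : f (-(1 / 2)) ∈ (P₁ : Set (EuclideanSpace ℝ (Fin (2 * n - 1)))) \
      ((↑(P₁ ⊓ P₂) : Set (EuclideanSpace ℝ (Fin (2 * n - 1)))) ∪ Metric.ball p₀ 1))
    (hf2 : f (1 / 2) ∈ (P₂ : Set (EuclideanSpace ℝ (Fin (2 * n - 1)))) \
      ((↑(P₁ ⊓ P₂) : Set (EuclideanSpace ℝ (Fin (2 * n - 1)))) ∪ Metric.ball p₀ 1))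
    (hiso : ∀ s ∈ Iic (-1 : ℝ) ∪ Ici (1 : ℝ), ∀ t ∈ Iic (-1 : ℝ) ∪ Ici (1 : ℝ),
      dist (f s) (f t) = |s - t|)
    (honto : f '' (Iic (-1 : ℝ) ∪ Ici (1 : ℝ)) =
      (↑(P₁ ⊓ P₂) : Set (EuclideanSpace ℝ (Fin (2 * n - 1)))) \ Metric.ball p₀ 1) :
    (∃ L : ℝ, 1 ≤ L ∧
      BiLipschitzOn L f (Iic (-1 : ℝ) ∪ {-(1 / 2), (1 / 2)} ∪ Ici (1 : ℝ))) ∧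
    ¬ ∃ F : ℝ → EuclideanSpace ℝ (Fin (2 * n - 1)),
        Continuous F ∧ Function.Injective F ∧
        (∀ t : ℝ, F t ∈
          ((P₁ : Set (EuclideanSpace ℝ (Fin (2 * n - 1)))) ∪ P₂) \ Metric.ball p₀ 1) ∧
        ∀ t ∈ Iic (-1 : ℝ) ∪ {-(1 / 2), (1 / 2)} ∪ Ici (1 : ℝ), F t = f t := by
  set I : Set ℝ := Iic (-1 : ℝ) ∪ Ici 1 with hIdef
  set A : Set ℝ := Iic (-1 : ℝ) ∪ {-(1 / 2), (1 / 2)} ∪ Ici (1 : ℝ) with hAdef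
  set ℓ : Set (EuclideanSpace ℝ (Fin (2 * n - 1))) := (↑(P₁ ⊓ P₂) : Set (EuclideanSpace ℝ (Fin (2 * n - 1)))) with hldef
  set K : Set (EuclideanSpace ℝ (Fin (2 * n - 1))) := ℓ \ Metric.ball p₀ 1 with hKdef
  have hm1 : (-1 : ℝ) ∈ I := Or.inl (by norm_num)
  have hIA : I ⊆ A := fun z hz => hz.elim (fun h => Or.inl (Or.inl h)) Or.inr
  have hhalfA : (-(1 / 2) : ℝ) ∈ A := Or.inl (Or.inr (mem_insert _ _))
  have hhalfA' : ((1 / 2) : ℝ) ∈ A := Or.inl (Or.inr (mem_insert_of_mem _ rfl))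
  -- the line minus the ball is closed and nonempty
  have hlclosed : IsClosed ℓ := AffineSubspace.closed_of_finiteDimensional _
  have hKclosed : IsClosed K := hlclosed.sdiff isOpen_ball
  have hmemK : ∀ t ∈ I, f t ∈ K := by
    intro t ht
    rw [← honto]
    exact mem_image_of_mem f ht
  have hKne : K.Nonempty := ⟨f (-1), hmemK _ hm1⟩
  -- the marked points are not on the line
  have hnl1 : f (-(1 / 2)) ∉ ℓ := fun h => hf1.2 (Or.inl h)
  have hnl2 : f (1 / 2) ∉ ℓ := fun h => hf2.2 (Or.inl h)
  have hnK1 : f (-(1 / 2)) ∉ K := fun h => hnl1 h.1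
  have hnK2 : f (1 / 2) ∉ K := fun h => hnl2 h.1
  -- the two marked points are distinct
  have hD : 0 < dist (f (-(1 / 2))) (f (1 / 2)) := by
    rw [dist_pos]
    intro h
    exact hnl1 ((AffineSubspace.mem_inf_iff _ _ _).2 ⟨hf1.1, h ▸ hf2.1⟩)
  set D := dist (f (-(1 / 2))) (f (1 / 2)) with hDdef
  constructor
  · -- bi-Lipschitz part
    -- distances from the marked points to the line part
    have hd1 : 0 < infDist (f (-(1 / 2))) K := (hKclosed.notMem_iff_infDist_pos hKne).1 hnK1
    have hd2 : 0 < infDist (f (1 / 2)) K := (hKclosed.notMem_iff_infDist_pos hKne).1 hnK2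
    have hsep1 : ∀ t ∈ I, 1 / 2 ≤ |(-(1 / 2) : ℝ) - t| := by
      intro t ht
      rcases abs_cases ((-(1 / 2) : ℝ) - t) with ⟨he, _⟩ | ⟨he, he'⟩ <;>
        rcases ht with h | h <;> simp only [mem_Iic, mem_Ici] at h <;> linarith
    have hsep2 : ∀ t ∈ I, 1 / 2 ≤ |((1 / 2) : ℝ) - t| := by
      intro t ht
      rcases abs_cases (((1 / 2) : ℝ) - t) with ⟨he, _⟩ | ⟨he, he'⟩ <;>
        rcases ht with h | h <;> simp only [mem_Iic, mem_Ici] at h <;> linarith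
    obtain ⟨L₁, hL₁1, hL₁⟩ := pair_bound f I (-(1 / 2)) hiso (-1) hm1 hsep1 _ hd1
      (fun t ht => infDist_le_dist_of_mem (hmemK t ht))
    obtain ⟨L₂, hL₂1, hL₂⟩ := pair_bound f I (1 / 2) hiso (-1) hm1 hsep2 _ hd2
      (fun t ht => infDist_le_dist_of_mem (hmemK t ht))
    set L : ℝ := max (max L₁ L₂) (max (D + D⁻¹) 1) with hLdef
    have hL1 : (1 : ℝ) ≤ L := le_max_of_le_right (le_max_right _ _)
    have hL0 : (0 : ℝ) < L := by linarith
    have hLD : D ≤ L := le_max_of_le_right (le_max_of_le_left (by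
      have : 0 ≤ D⁻¹ := by positivity
      linarith))
    have hLDi : L⁻¹ ≤ D := by
      have h1 : D⁻¹ ≤ L := le_max_of_le_right (le_max_of_le_left (by linarith))
      calc L⁻¹ ≤ (D⁻¹)⁻¹ := inv_anti₀ (by positivity) h1
        _ = D := inv_inv D
    -- transfer a bound for L' ≤ L to a bound for L
    have htrans : ∀ L' : ℝ, 1 ≤ L' → L' ≤ L → ∀ u r : ℝ, 0 ≤ u →
        (L'⁻¹ * u ≤ r ∧ r ≤ L' * u) → L⁻¹ * u ≤ r ∧ r ≤ L * u := by
      intro L' hL'1 hL'L u r hu ⟨ha, hb⟩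
      constructor
      · exact le_trans (mul_le_mul_of_nonneg_right (inv_anti₀ (by linarith) hL'L) hu) ha
      · exact le_trans hb (mul_le_mul_of_nonneg_right hL'L hu)
    refine ⟨L, hL1, ?_⟩
    have classify : ∀ z ∈ A, z ∈ I ∨ z = -(1 / 2) ∨ z = (1 / 2) := by
      intro z hz
      rcases hz with (h | h) | h
      · exact Or.inl (Or.inl h)
      · exact Or.inr (by simpa using h)
      · exact Or.inl (Or.inr h)
    -- main case analysis
    intro x hx y hy
    have hiso' : ∀ s ∈ I, ∀ t ∈ I, L⁻¹ * |s - t| ≤ dist (f s) (f t) ∧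
        dist (f s) (f t) ≤ L * |s - t| := by
      intro s hs t ht
      rw [hiso s hs t ht]
      have hab := abs_nonneg (s - t)
      have hLi : L⁻¹ ≤ 1 := by
        rw [inv_le_one_iff₀]; right; exact hL1
      constructor
      · nlinarith
      · nlinarith
    have hswap : ∀ u v : ℝ, (L⁻¹ * |u - v| ≤ dist (f u) (f v) ∧
        dist (f u) (f v) ≤ L * |u - v|) → (L⁻¹ * |v - u| ≤ dist (f v) (f u) ∧
        dist (f v) (f u) ≤ L * |v - u|) := by
      intro u v ⟨ha, hb⟩
      rw [dist_comm, abs_sub_comm]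
      exact ⟨ha, hb⟩
    have hcross : L⁻¹ * |(-(1 / 2) : ℝ) - 1 / 2| ≤ D ∧ D ≤ L * |(-(1 / 2) : ℝ) - 1 / 2| := by
      have : |(-(1 / 2) : ℝ) - 1 / 2| = 1 := by norm_num
      rw [this, mul_one, mul_one]
      exact ⟨hLDi, hLD⟩
    have hself : ∀ u : ℝ, L⁻¹ * |u - u| ≤ dist (f u) (f u) ∧
        dist (f u) (f u) ≤ L * |u - u| := by
      intro u; simp
    rcases classify x hx with hxI | hx2 | hx2 <;> rcases classify y hy with hyI | hy2 | hy2
    · exact hiso' x hxI y hyI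
    · subst hy2
      exact hswap _ _ (htrans L₁ hL₁1 (le_max_of_le_left (le_max_left _ _)) _ _
        (abs_nonneg _) (hL₁ x hxI))
    · subst hy2
      exact hswap _ _ (htrans L₂ hL₂1 (le_max_of_le_left (le_max_right _ _)) _ _
        (abs_nonneg _) (hL₂ x hxI))
    · subst hx2
      exact htrans L₁ hL₁1 (le_max_of_le_left (le_max_left _ _)) _ _
        (abs_nonneg _) (hL₁ y hyI)
    · subst hx2; subst hy2; exact hself _
    · subst hx2; subst hy2; exact hcross
    · subst hx2
      exact htrans L₂ hL₂1 (le_max_of_le_left (le_max_right _ _)) _ _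
        (abs_nonneg _) (hL₂ y hyI)
    · subst hx2; subst hy2; exact hswap _ _ hcross
    · subst hx2; subst hy2; exact hself _
  · -- no continuous injective extension
    rintro ⟨F, hFc, hFi, hFmem, hFext⟩
    have hFa : F (-(1 / 2)) = f (-(1 / 2)) := hFext _ hhalfA
    have hFb : F (1 / 2) = f (1 / 2) := hFext _ hhalfA'
    set S : Set (EuclideanSpace ℝ (Fin (2 * n - 1))) := F '' Icc (-(1 / 2) : ℝ) (1 / 2) with hSdef
    have hconn : IsPreconnected S := isPreconnected_Icc.image F hFc.continuousOn
    have hP1closed : IsClosed (↑P₁ : Set (EuclideanSpace ℝ (Fin (2 * n - 1)))) := AffineSubspace.closed_of_finiteDimensional _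
    have hP2closed : IsClosed (↑P₂ : Set (EuclideanSpace ℝ (Fin (2 * n - 1)))) := AffineSubspace.closed_of_finiteDimensional _
    -- there is a point of the arc on the line
    obtain ⟨t₀, ht₀, ht₀l⟩ : ∃ t₀ ∈ Icc (-(1 / 2) : ℝ) (1 / 2), F t₀ ∈ ℓ := by
      by_contra h
      push_neg at h
      have hsub : S ⊆ (↑P₂ : Set (EuclideanSpace ℝ (Fin (2 * n - 1))))ᶜ ∪ (↑P₁ : Set (EuclideanSpace ℝ (Fin (2 * n - 1))))ᶜ := by
        rintro z ⟨t, ht, rfl⟩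
        by_contra hz
        simp only [mem_union, mem_compl_iff, not_or, not_not] at hz
        exact h t ht ((AffineSubspace.mem_inf_iff _ _ _).2 ⟨hz.2, hz.1⟩)
      have hane : (S ∩ (↑P₂ : Set (EuclideanSpace ℝ (Fin (2 * n - 1))))ᶜ).Nonempty := by
        refine ⟨F (-(1 / 2)), mem_image_of_mem F (by norm_num), ?_⟩
        intro hmem
        rw [hFa] at hmem
        exact hnl1 ((AffineSubspace.mem_inf_iff _ _ _).2 ⟨hf1.1, hmem⟩)
      have hbne : (S ∩ (↑P₁ : Set (EuclideanSpace ℝ (Fin (2 * n - 1))))ᶜ).Nonempty := by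
        refine ⟨F (1 / 2), mem_image_of_mem F (by norm_num), ?_⟩
        intro hmem
        rw [hFb] at hmem
        exact hnl2 ((AffineSubspace.mem_inf_iff _ _ _).2 ⟨hmem, hf2.1⟩)
      obtain ⟨z, hzS, hz2, hz1⟩ := hconn _ _ hP2closed.isOpen_compl hP1closed.isOpen_compl
        hsub hane hbne
      obtain ⟨t, ht, rfl⟩ := hzS
      rcases (hFmem t).1 with h' | h'
      · exact hz1 h'
      · exact hz2 h'
    -- that point is in the image of the isometric part
    have hFt₀K : F t₀ ∈ f '' I := by
      rw [honto]
      exact ⟨ht₀l, (hFmem t₀).2⟩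
    obtain ⟨s, hsI, hfs⟩ := hFt₀K
    have hFs : F s = f s := hFext _ (hIA hsI)
    have : s = t₀ := hFi (by rw [hFs, hfs])
    obtain ⟨h1', h2'⟩ := ht₀
    rcases hsI with h | h <;> simp only [mem_Iic, mem_Ici] at h <;> subst this <;> linarith
end
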